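/- Let L_n ⊆ S_n be a zigzag language and let π, ρ, σ be three consecutive permutations in J(L_n). If ρ is obtained from π by a jump of a value j < n, σ is obtained from ρ by a jump of the value n, and the value j is at the first or last position of p^{n−j}(ρ), then s_{n,i}^ρ = s_{n,i}^π for all i ∈ {1,…,n−1} ∖ {j−1, j}, s_{n,j−1}^ρ = j−1, and s_{n,j}^ρ = s_{n,j−1}^π. -/

import Mathlib

/-!
Shared definitions: permutations in one-line notation as lists of naturals,
deletion `p`, insertion `c_i`, zigzag languages, the Gray code sequence `J(L_n)`,
jumps, minimal jumps, the auxiliary sequences `s_n^π`, Algorithm M,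
vincular pattern containment and 2-clumped permutations.
-/

/-- `S_n`: permutations of `{1,…,n}` in one-line notation, as lists of naturals. -/
def SymmList (n : ℕ) : Set (List ℕ) := {l | List.Perm l (List.range' 1 n)}

/-- The identity permutation `id_n = 1 2 ⋯ n`. -/
def idPerm (n : ℕ) : List ℕ := List.range' 1 n

/-- `p(π)`: delete the largest entry `n = π.length` from the permutation `π ∈ S_n`. -/
def pdel (l : List ℕ) : List ℕ := l.erase l.length

/-- `c_i(π)`: insert the new largest value `π.length + 1` at (1-indexed) position `i`. -/
def cins (i : ℕ) (l : List ℕ) : List ℕ :=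
  l.take (i - 1) ++ (l.length + 1) :: l.drop (i - 1)

/-- Zigzag languages of permutations: `L_0 = {ε}` is a zigzag language, and
`L ⊆ S_{n+1}` is a zigzag language if `p(L)` is a zigzag language and
`c_1(π), c_{n+1}(π) ∈ L` for every `π ∈ p(L)`. -/
inductive IsZigzag : ℕ → Set (List ℕ) → Prop
  | zero : IsZigzag 0 {[]}
  | succ (n : ℕ) (L : Set (List ℕ)) :
      L ⊆ SymmList (n + 1) →
      IsZigzag n (pdel '' L) →
      (∀ l ∈ pdel '' L, cins 1 l ∈ L ∧ cins (n + 1) l ∈ L) →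
      IsZigzag (n + 1) L

/-- `→c(π)`: the sequence of those `c_1(π),…,c_n(π)` lying in `L`,
in increasing order of the insertion position. -/
noncomputable def cSeq (L : Set (List ℕ)) (n : ℕ) (l : List ℕ) : List (List ℕ) :=
  ((List.range' 1 n).map (fun i => cins i l)).filter
    (fun x => @decide (x ∈ L) (Classical.propDecidable _))

/-- The Gray code sequence `J(L_n)` of a language `L ⊆ S_n`:
`J(L_0) = ε`, and `J(L_{n+1})` is obtained from `J(L_n)` (for the language
`p(L)`) by replacing its entries alternately by `←c(π)` (the reverse of
`→c(π)`) and `→c(π)`. -/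
noncomputable def Jseq : ℕ → Set (List ℕ) → List (List ℕ)
  | 0, _ => [[]]
  | (n + 1), L =>
      (((Jseq n (pdel '' L)).mapIdx
        (fun k π => if k % 2 = 0 then (cSeq L (n + 1) π).reverse
                    else cSeq L (n + 1) π)).flatten)

/-- `ρ` is obtained from `π` by a right jump of the value `v` by `d` steps. -/
def RightJump (π ρ : List ℕ) (v d : ℕ) : Prop :=
  0 < d ∧ ∃ A B C : List ℕ, B.length = d ∧ (∀ x ∈ B, x < v) ∧
    π = A ++ v :: (B ++ C) ∧ ρ = A ++ (B ++ v :: C)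

/-- `ρ` is obtained from `π` by a left jump of the value `v` by `d` steps. -/
def LeftJump (π ρ : List ℕ) (v d : ℕ) : Prop := RightJump ρ π v d

/-- A right jump that is minimal with respect to `L`: every right jump of the
same value by fewer steps yields a permutation not in `L`. -/
def MinimalRightJump (L : Set (List ℕ)) (π ρ : List ℕ) (v d : ℕ) : Prop :=
  RightJump π ρ v d ∧ ∀ d' ρ', d' < d → RightJump π ρ' v d' → ρ' ∉ L

/-- A left jump that is minimal with respect to `L`. -/
def MinimalLeftJump (L : Set (List ℕ)) (π ρ : List ℕ) (v d : ℕ) : Prop :=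
  LeftJump π ρ v d ∧ ∀ d' ρ', d' < d → LeftJump π ρ' v d' → ρ' ∉ L

/-- The auxiliary sequence `s_n^π` of a permutation `π` occurring in `J(L_n)`,
as a function of the index `i ∈ {1,…,n}` (value `0` outside this range). -/
noncomputable def sVec : ℕ → Set (List ℕ) → List ℕ → ℕ → ℕ
  | 0, _, _, _ => 0
  | 1, _, _, i => if i = 1 then 1 else 0
  | (n + 2), L, π, i =>
      let L' := pdel '' L
      let π' := pdel π
      let cbar := if ((Jseq (n + 1) L').idxOf π') % 2 = 0
                  then (cSeq L (n + 2) π').reverse else cSeq L (n + 2) π'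
      if cbar.getLast? = some π then
        (if i ≤ n then sVec (n + 1) L' π' i
         else if i = n + 1 then n + 1
         else if i = n + 2 then sVec (n + 1) L' π' (n + 1) else 0)
      else
        (if i ≤ n + 1 then sVec (n + 1) L' π' i
         else if i = n + 2 then n + 2 else 0)

/-- `j` is at the first position of `l`, or the entry immediately left of `j`
in `l` is larger than `j`. -/
def AtLeftTurn (l : List ℕ) (j : ℕ) : Prop :=
  ∃ A B : List ℕ, l = A ++ j :: B ∧ (A = [] ∨ ∃ x, A.getLast? = some x ∧ j < x)

/-- `j` is at the last position of `l`, or the entry immediately right of `j`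
in `l` is larger than `j`. -/
def AtRightTurn (l : List ℕ) (j : ℕ) : Prop :=
  ∃ A B : List ℕ, l = A ++ j :: B ∧ (B = [] ∨ ∃ x, B.head? = some x ∧ j < x)

/-- `j` is not at the first position of `l`, and the entry immediately left of
`j` in `l` is smaller than `j`. -/
def SmallerLeftNeighbor (l : List ℕ) (j : ℕ) : Prop :=
  ∃ A B : List ℕ, ∃ x, l = A ++ j :: B ∧ A.getLast? = some x ∧ x < j

/-- `j` is not at the last position of `l`, and the entry immediately right of
`j` in `l` is smaller than `j`. -/
def SmallerRightNeighbor (l : List ℕ) (j : ℕ) : Prop :=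
  ∃ A B : List ℕ, ∃ x, l = A ++ j :: B ∧ B.head? = some x ∧ x < j

/-- A state of Algorithm M: the current permutation `π` and the auxiliary
arrays `o` and `s`; `o j = false` encodes direction `L` (left) and
`o j = true` encodes `R` (right). -/
structure MState where
  perm : List ℕ
  o : ℕ → Bool
  s : ℕ → ℕ

/-- The initial state of Algorithm M (step M1): `π = id_n`, `o_j = L`, `s_j = j`. -/
def MInit (n : ℕ) : MState := ⟨idPerm n, fun _ => false, fun j => j⟩

/-- One iteration (steps M3–M5) of Algorithm M on a language `L ⊆ S_n`:
with `j := s_n ≠ 1`, the permutation jumps minimally in the direction `o_j`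
(step M4), and the arrays `o`, `s` are updated as in step M5. -/
def MStep (L : Set (List ℕ)) (n : ℕ) (σ σ' : MState) : Prop :=
  σ.s n ≠ 1 ∧
  σ'.perm ∈ L ∧
  ((σ.o (σ.s n) = false ∧ ∃ d, MinimalLeftJump L σ.perm σ'.perm (σ.s n) d) ∨
   (σ.o (σ.s n) = true ∧ ∃ d, MinimalRightJump L σ.perm σ'.perm (σ.s n) d)) ∧
  (((σ.o (σ.s n) = false ∧ AtLeftTurn σ'.perm (σ.s n)) ∨
    (σ.o (σ.s n) = true ∧ AtRightTurn σ'.perm (σ.s n))) →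
      σ'.o = Function.update σ.o (σ.s n) (!σ.o (σ.s n)) ∧
      σ'.s = Function.update (Function.update (Function.update σ.s n n) (σ.s n)
               ((Function.update σ.s n n) (σ.s n - 1))) (σ.s n - 1) (σ.s n - 1)) ∧
  (¬ ((σ.o (σ.s n) = false ∧ AtLeftTurn σ'.perm (σ.s n)) ∨
      (σ.o (σ.s n) = true ∧ AtRightTurn σ'.perm (σ.s n))) →
      σ'.o = σ.o ∧ σ'.s = Function.update σ.s n n)

/-- `π` contains the vincular pattern `pat` whose marked adjacent pair starts
at (0-indexed) position `k` of `pat`. -/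
def ContainsVincular (π pat : List ℕ) (k : ℕ) : Prop :=
  ∃ f : ℕ → ℕ, StrictMonoOn f (Set.Iio pat.length) ∧
    (∀ i < pat.length, f i < π.length) ∧
    f (k + 1) = f k + 1 ∧
    (∀ i < pat.length, ∀ j < pat.length,
      (pat.getD i 0 < pat.getD j 0 ↔ π.getD (f i) 0 < π.getD (f j) 0))

/-- 2-clumped permutations: those avoiding the vincular patterns
`3(51)24`, `3(51)42`, `24(51)3` and `42(51)3`. -/
def TwoClumped (π : List ℕ) : Prop :=
  ¬ ContainsVincular π [3, 5, 1, 2, 4] 1 ∧ ¬ ContainsVincular π [3, 5, 1, 4, 2] 1 ∧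
  ¬ ContainsVincular π [2, 4, 5, 1, 3] 2 ∧ ¬ ContainsVincular π [4, 2, 5, 1, 3] 2

/-- `S'_n`: the set of 2-clumped permutations in `S_n`. -/
def SClump (n : ℕ) : Set (List ℕ) := {l ∈ SymmList n | TwoClumped l}

/-- `B_n`: the permutations obtained from `1` by repeatedly inserting the new
largest value at the first or the last position. -/
def Bset : ℕ → Set (List ℕ)
  | 0 => {[]}
  | 1 => {[1]}
  | (n + 2) => {l | ∃ π ∈ Bset (n + 1), l = cins 1 π ∨ l = cins (n + 2) π}

/-!
Write `π_m := p^{n-m}(π)` and `ρ_m := p^{n-m}(ρ)` for `j ≤ m ≤ n`; these are consecutive in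
`J(p^{n-m}(L_n))`. Deleting values larger than `j` does not disturb a jump of `j`, so for `m > j`
the permutations `π_m` and `ρ_m` are still related by that jump and hence have different parents:
`π_m` is the last entry of its block `c̄(p(π_m))` and `ρ_m` the first, hence not the last, entry of
the next block. At level `m = j` the jump moves the largest value, so `π_j` and `ρ_j` lie in one
block; as `j` is at an end of `ρ_j`, that permutation is `c_1` or `c_j` of its parent, i.e. an end
of the block, and since it is not the first entry it is the last one, while `π_j` is not.
Unwinding the recursion for `s`: at level `j`, `s^ρ` gets `j - 1` at position `j - 1` and the old
last entry at position `j`, where `s^π` has it at position `j - 1`; at each level `m > j` both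
inherit the positions below `m - 1`, and both have `m - 1` at position `m - 1` once `m - 1 > j`,
for `ρ` because `ρ_{m-1}` was not the last entry of its block.
-/
namespace SymmList

variable {n : ℕ} {l : List ℕ}

lemma length_eq (h : l ∈ SymmList n) : l.length = n := by
  simpa using List.Perm.length_eq h

lemma nodup (h : l ∈ SymmList n) : l.Nodup :=
  h.nodup_iff.2 List.nodup_range'

lemma mem_iff (h : l ∈ SymmList n) {a : ℕ} : a ∈ l ↔ 1 ≤ a ∧ a ≤ n := by
  rw [List.Perm.mem_iff h, List.mem_range'_1]
  omega

lemma succ_notMem (h : l ∈ SymmList n) : n + 1 ∉ l := by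
  simp [mem_iff h]

lemma pdel_eq (h : l ∈ SymmList n) : pdel l = l.erase n := by
  rw [pdel, length_eq h]

end SymmList

lemma IsZigzag.subset_symmList {n : ℕ} {L : Set (List ℕ)} (h : IsZigzag n L) :
    L ⊆ SymmList n := by
  cases h with
  | zero => rintro x rfl; exact List.Perm.refl _
  | succ _ _ hsub _ _ => exact hsub

lemma IsZigzag.pdel_image {n : ℕ} {L : Set (List ℕ)} (h : IsZigzag (n + 1) L) :
    IsZigzag n (pdel '' L) := by
  cases h with
  | succ _ _ _ h' _ => exact h'

section cins

variable {n : ℕ} {κ : List ℕ}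

lemma cins_eq (h : κ ∈ SymmList n) (i : ℕ) :
    cins i κ = κ.take (i - 1) ++ (n + 1) :: κ.drop (i - 1) := by
  rw [cins, SymmList.length_eq h]

lemma cins_mem_symmList (h : κ ∈ SymmList n) (i : ℕ) : cins i κ ∈ SymmList (n + 1) := by
  show List.Perm _ _
  rw [cins_eq h, List.range'_concat]
  refine List.perm_middle.trans ?_
  rw [List.take_append_drop]
  simpa [Nat.add_comm] using ((h.cons (n + 1)).trans (List.perm_append_singleton _ _).symm)

lemma succ_notMem_take (h : κ ∈ SymmList n) (i : ℕ) : n + 1 ∉ κ.take i :=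
  fun hm => SymmList.succ_notMem h (List.mem_of_mem_take hm)

lemma pdel_cins (h : κ ∈ SymmList n) (i : ℕ) : pdel (cins i κ) = κ := by
  rw [SymmList.pdel_eq (cins_mem_symmList h i), cins_eq h,
    List.erase_append_right _ (succ_notMem_take h _), List.erase_cons_head, List.take_append_drop]

lemma idxOf_cins (h : κ ∈ SymmList n) {i : ℕ} (hi : i ∈ Set.Icc 1 (n + 1)) :
    (cins i κ).idxOf (n + 1) = i - 1 := by
  rw [cins_eq h, List.idxOf_append_of_notMem (succ_notMem_take h _), List.idxOf_cons_self,
    List.length_take, SymmList.length_eq h]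
  grind

lemma cins_injOn (h : κ ∈ SymmList n) : Set.InjOn (fun i => cins i κ) (Set.Icc 1 (n + 1)) := by
  intro i hi i' hi' he
  have := congrArg (List.idxOf (n + 1)) he
  simp only [idxOf_cins h hi, idxOf_cins h hi'] at this
  grind

end cins

section cSeq

variable {L : Set (List ℕ)} {n : ℕ} {κ : List ℕ}

lemma mem_cSeq {x : List ℕ} :
    x ∈ cSeq L n κ ↔ (∃ i ∈ Set.Icc 1 n, cins i κ = x) ∧ x ∈ L := by
  simp [cSeq, Nat.lt_one_add_iff]

lemma nodup_cSeq (h : κ ∈ SymmList n) : (cSeq L (n + 1) κ).Nodup := by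
  refine List.Nodup.filter _ (List.Nodup.map_on ?_ List.nodup_range')
  intro i hi i' hi' he
  simp only [List.mem_range'_1] at hi hi'
  exact cins_injOn h ⟨hi.1, by omega⟩ ⟨hi'.1, by omega⟩ he

lemma head?_cSeq (h : cins 1 κ ∈ L) : (cSeq L (n + 1) κ).head? = some (cins 1 κ) := by
  simp [cSeq, List.range'_succ, h]

lemma getLast?_cSeq (h : cins (n + 1) κ ∈ L) :
    (cSeq L (n + 1) κ).getLast? = some (cins (n + 1) κ) := by
  simp [cSeq, List.range'_concat, h, Nat.add_comm]

end cSeq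

/-- The block of `J(L_n)` contributed by the `k`-th entry `κ` of `J(L_{n-1})`. -/
noncomputable def cBlock (L : Set (List ℕ)) (n k : ℕ) (κ : List ℕ) : List (List ℕ) :=
  if k % 2 = 0 then (cSeq L n κ).reverse else cSeq L n κ

/-- The sequence `c̄(p(π))` in the recursion for `s_n^π`. -/
noncomputable def cBar (L : Set (List ℕ)) (n : ℕ) (π : List ℕ) : List (List ℕ) :=
  cBlock L n ((Jseq (n - 1) (pdel '' L)).idxOf (pdel π)) (pdel π)

section Jseq

variable {L : Set (List ℕ)} {n : ℕ}

lemma Jseq_succ (n : ℕ) (L : Set (List ℕ)) :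
    Jseq (n + 1) L = ((Jseq n (pdel '' L)).mapIdx (cBlock L (n + 1))).flatten :=
  rfl

lemma mem_cBlock {k : ℕ} {κ x : List ℕ} : x ∈ cBlock L n k κ ↔ x ∈ cSeq L n κ := by
  unfold cBlock; split <;> simp

lemma nodup_cBlock {k : ℕ} {κ : List ℕ} (h : κ ∈ SymmList n) :
    (cBlock L (n + 1) k κ).Nodup := by
  unfold cBlock; split
  · exact List.nodup_reverse.2 (nodup_cSeq h)
  · exact nodup_cSeq h

lemma pdel_of_mem_cBlock {k : ℕ} {κ x : List ℕ} (h : κ ∈ SymmList n)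
    (hx : x ∈ cBlock L (n + 1) k κ) : pdel x = κ ∧ x ∈ L := by
  obtain ⟨⟨i, -, rfl⟩, hL⟩ := mem_cSeq.1 (mem_cBlock.1 hx)
  exact ⟨pdel_cins h i, hL⟩

lemma cins_one_mem_cBlock (hz : IsZigzag (n + 1) L) {k : ℕ} {κ : List ℕ}
    (hκ : κ ∈ pdel '' L) : cins 1 κ ∈ cBlock L (n + 1) k κ := by
  rcases hz with _ | ⟨_, _, -, -, hc⟩
  exact mem_cBlock.2 (mem_cSeq.2 ⟨⟨1, ⟨le_rfl, by omega⟩, rfl⟩, (hc κ hκ).1⟩)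

lemma mem_of_mem_Jseq :
    ∀ {n : ℕ} {L : Set (List ℕ)}, IsZigzag n L → ∀ {x}, x ∈ Jseq n L → x ∈ L
  | _, _, .zero, x, hx => by simpa [Jseq] using hx
  | _, _, .succ n L _ hz' _, x, hx => by
    obtain ⟨b, hb, hxb⟩ := List.mem_flatten.1 ((Jseq_succ n L) ▸ hx)
    obtain ⟨k, hk, rfl⟩ := List.mem_mapIdx.1 hb
    have hκ := mem_of_mem_Jseq hz' (List.getElem_mem hk)
    exact (pdel_of_mem_cBlock (hz'.subset_symmList hκ) hxb).2

lemma nodup_Jseq : ∀ {n : ℕ} {L : Set (List ℕ)}, IsZigzag n L → (Jseq n L).Nodup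
  | _, _, .zero => by simp [Jseq]
  | _, _, .succ n L _ hz' _ => by
    have hsymm : ∀ {c} (hc : c < (Jseq n (pdel '' L)).length),
        (Jseq n (pdel '' L))[c] ∈ SymmList n :=
      fun hc => hz'.subset_symmList (mem_of_mem_Jseq hz' (List.getElem_mem hc))
    rw [Jseq_succ, List.nodup_flatten, List.pairwise_iff_getElem]
    refine ⟨fun b hb => ?_, fun a b ha hb hab x hxa hxb => ?_⟩
    · obtain ⟨k, hk, rfl⟩ := List.mem_mapIdx.1 hb
      exact nodup_cBlock (hsymm hk)
    · rw [List.length_mapIdx] at ha hb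
      rw [List.getElem_mapIdx] at hxa hxb
      have hpa := (pdel_of_mem_cBlock (hsymm ha) hxa).1
      have hpb := (pdel_of_mem_cBlock (hsymm hb) hxb).1
      have := ((nodup_Jseq hz').getElem_inj_iff).1 (hpa.symm.trans hpb)
      omega

lemma cBar_eq_cBlock (hz : IsZigzag n (pdel '' L)) {c : ℕ} {κ x : List ℕ}
    (hκ : (Jseq n (pdel '' L))[c]? = some κ) (hx : pdel x = κ) :
    cBar L (n + 1) x = cBlock L (n + 1) c κ := by
  obtain ⟨hc, rfl⟩ := List.getElem?_eq_some_iff.1 hκ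
  rw [cBar, Nat.add_sub_cancel, hx, (nodup_Jseq hz).idxOf_getElem]

lemma cBar_endpoints (hz : IsZigzag (n + 1) L) {x : List ℕ} (hx : x ∈ L) :
    ((cBar L (n + 1) x).head? = some (cins 1 (pdel x)) ∧
        (cBar L (n + 1) x).getLast? = some (cins (n + 1) (pdel x))) ∨
      ((cBar L (n + 1) x).head? = some (cins (n + 1) (pdel x)) ∧
        (cBar L (n + 1) x).getLast? = some (cins 1 (pdel x))) := by
  rcases hz with _ | ⟨_, _, -, -, hc⟩
  obtain ⟨h1, h2⟩ := hc _ ⟨x, hx, rfl⟩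
  unfold cBar cBlock; split
  · right; simp [head?_cSeq h1, getLast?_cSeq h2]
  · left; simp [head?_cSeq h1, getLast?_cSeq h2]

lemma cBar_head?_ne_getLast? (hn : 1 ≤ n) (hz : IsZigzag (n + 1) L) {x : List ℕ}
    (hx : x ∈ L) :
    (cBar L (n + 1) x).head? ≠ (cBar L (n + 1) x).getLast? := by
  have hκ : pdel x ∈ SymmList n := hz.pdel_image.subset_symmList ⟨x, hx, rfl⟩
  have hne : cins 1 (pdel x) ≠ cins (n + 1) (pdel x) := fun he =>
    absurd (cins_injOn hκ ⟨le_rfl, by omega⟩ ⟨by omega, le_rfl⟩ he) (by omega)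
  rcases cBar_endpoints hz hx with ⟨h1, h2⟩ | ⟨h1, h2⟩ <;> rw [h1, h2] <;>
    simp [hne, hne.symm]

end Jseq

lemma getElem?_flatten_adjacent {α : Type*} {bs : List (List α)} (hne : ∀ b ∈ bs, b ≠ [])
    {k : ℕ} {x y : α} (hx : bs.flatten[k]? = some x) (hy : bs.flatten[k + 1]? = some y) :
    (∃ (c t : ℕ) (b : List α), bs[c]? = some b ∧ b[t]? = some x ∧ b[t + 1]? = some y) ∨
      (∃ (c : ℕ) (b b' : List α), bs[c]? = some b ∧ bs[c + 1]? = some b' ∧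
        b.getLast? = some x ∧ b'.head? = some y) := by
  induction bs generalizing k with
  | nil => simp at hx
  | cons b bs ih =>
    rw [List.flatten_cons] at hx hy
    rcases lt_trichotomy (k + 1) b.length with hk | hk | hk
    · rw [List.getElem?_append_left (by omega)] at hx hy
      exact Or.inl ⟨0, k, b, rfl, hx, hy⟩
    · rw [List.getElem?_append_left (by omega)] at hx
      rw [List.getElem?_append_right hk.ge, ← hk, Nat.sub_self] at hy
      obtain _ | ⟨b', bs'⟩ := bs
      · simp at hy
      · have hb' : b' ≠ [] := hne b' (by simp)
        rw [List.flatten_cons, List.getElem?_append_left (List.length_pos_iff.2 hb')] at hy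
        refine Or.inr ⟨0, b, b', rfl, rfl, ?_, by rwa [List.head?_eq_getElem?]⟩
        rwa [List.getLast?_eq_getElem?, ← hk]
    · rw [List.getElem?_append_right (by omega)] at hx hy
      rw [show k + 1 - b.length = k - b.length + 1 by omega] at hy
      rcases ih (fun b hb => hne b (by simp [hb])) hx hy with
        ⟨c, t, b₁, h₁, hx₁, hy₁⟩ | ⟨c, b₁, b₂, h₁, h₂, hx₁, hy₂⟩
      · exact Or.inl ⟨c + 1, t, b₁, h₁, hx₁, hy₁⟩
      · exact Or.inr ⟨c + 1, b₁, b₂, h₁, h₂, hx₁, hy₂⟩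

lemma List.Nodup.getLast?_ne_and_head?_ne {α : Type*} {b : List α} (h : b.Nodup) {t : ℕ}
    {x y : α} (hx : b[t]? = some x) (hy : b[t + 1]? = some y) :
    b.getLast? ≠ some x ∧ b.head? ≠ some y := by
  obtain ⟨ht, rfl⟩ := List.getElem?_eq_some_iff.1 hx
  obtain ⟨ht', rfl⟩ := List.getElem?_eq_some_iff.1 hy
  rw [List.getLast?_eq_getElem?, List.head?_eq_getElem?]
  constructor <;> intro he <;> obtain ⟨_, he⟩ := List.getElem?_eq_some_iff.1 he <;>
    have := h.getElem_inj_iff.1 he <;> omega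

lemma Jseq_succ_adjacent {n : ℕ} {L : Set (List ℕ)} (hz : IsZigzag (n + 1) L) {k : ℕ}
    {x y : List ℕ} (hx : (Jseq (n + 1) L)[k]? = some x)
    (hy : (Jseq (n + 1) L)[k + 1]? = some y) :
    (pdel x = pdel y ∧ (cBar L (n + 1) x).getLast? ≠ some x ∧
        (cBar L (n + 1) y).head? ≠ some y) ∨
      (pdel x ≠ pdel y ∧
        (∃ c, (Jseq n (pdel '' L))[c]? = some (pdel x) ∧
          (Jseq n (pdel '' L))[c + 1]? = some (pdel y)) ∧
        (cBar L (n + 1) x).getLast? = some x ∧ (cBar L (n + 1) y).head? = some y) := by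
  have hz' := hz.pdel_image
  have hsymm : ∀ {c κ}, (Jseq n (pdel '' L))[c]? = some κ → κ ∈ SymmList n :=
    fun hκ => hz'.subset_symmList (mem_of_mem_Jseq hz' (List.mem_of_getElem? hκ))
  have hne : ∀ b ∈ (Jseq n (pdel '' L)).mapIdx (cBlock L (n + 1)), b ≠ [] := by
    intro b hb
    obtain ⟨c, hc, rfl⟩ := List.mem_mapIdx.1 hb
    exact List.ne_nil_of_mem
      (cins_one_mem_cBlock hz (mem_of_mem_Jseq hz' (List.getElem_mem hc)))
  rw [Jseq_succ] at hx hy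
  rcases getElem?_flatten_adjacent hne hx hy with
    ⟨c, t, b, hb, hxb, hyb⟩ | ⟨c, b, b', hb, hb', hxb, hyb⟩
  · rw [List.getElem?_mapIdx] at hb
    obtain ⟨κ, hκ, rfl⟩ := Option.map_eq_some_iff.1 hb
    have hpx := (pdel_of_mem_cBlock (hsymm hκ) (List.mem_of_getElem? hxb)).1
    have hpy := (pdel_of_mem_cBlock (hsymm hκ) (List.mem_of_getElem? hyb)).1
    left
    rw [cBar_eq_cBlock hz' hκ hpx, cBar_eq_cBlock hz' hκ hpy]
    exact ⟨hpx.trans hpy.symm, (nodup_cBlock (hsymm hκ)).getLast?_ne_and_head?_ne hxb hyb⟩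
  · rw [List.getElem?_mapIdx] at hb hb'
    obtain ⟨κ, hκ, rfl⟩ := Option.map_eq_some_iff.1 hb
    obtain ⟨κ', hκ', rfl⟩ := Option.map_eq_some_iff.1 hb'
    have hpx := (pdel_of_mem_cBlock (hsymm hκ) (List.mem_of_getLast? hxb)).1
    have hpy := (pdel_of_mem_cBlock (hsymm hκ') (List.mem_of_head? hyb)).1
    right
    rw [cBar_eq_cBlock hz' hκ hpx, cBar_eq_cBlock hz' hκ' hpy, hpx, hpy]
    refine ⟨fun he => ?_, ⟨c, hκ, hκ'⟩, hxb, hyb⟩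
    obtain ⟨hc, rfl⟩ := List.getElem?_eq_some_iff.1 hκ
    obtain ⟨hc', he'⟩ := List.getElem?_eq_some_iff.1 hκ'
    have := (nodup_Jseq hz').getElem_inj_iff.1 (he.trans he'.symm)
    omega

namespace RightJump

variable {π ρ : List ℕ} {v d : ℕ}

lemma ne (h : RightJump π ρ v d) : π ≠ ρ := by
  obtain ⟨hd, A, B, C, hlen, hB, rfl, rfl⟩ := h
  obtain _ | ⟨b, B⟩ := B
  · simp at hlen; omega
  intro he
  have := hB b (by simp)
  simp_all

lemma exists_lt_mem (h : RightJump π ρ v d) : ∃ b < v, b ∈ π ∧ b ∈ ρ := by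
  obtain ⟨hd, A, _ | ⟨b, B⟩, C, hlen, hB, rfl, rfl⟩ := h
  · simp at hlen; omega
  · exact ⟨b, hB b (by simp), by simp, by simp⟩

lemma erase_of_lt (h : RightJump π ρ v d) {w : ℕ} (hw : v < w) :
    RightJump (π.erase w) (ρ.erase w) v d := by
  obtain ⟨hd, A, B, C, hlen, hB, rfl, rfl⟩ := h
  have hwv : v ≠ w := hw.ne
  have hwB : w ∉ B := fun hm => (hB w hm).not_gt hw
  refine ⟨hd, ?_⟩
  by_cases hwA : w ∈ A
  · exact ⟨A.erase w, B, C, hlen, hB, by simp [List.erase_append_left _ hwA],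
      by simp [List.erase_append_left _ hwA]⟩
  · refine ⟨A, B, C.erase w, hlen, hB, ?_, ?_⟩ <;>
      simp [List.erase_append_right _ hwA, List.erase_append_right _ hwB, hwv]

lemma erase_eq (h : RightJump π ρ v d) (hπ : π.Nodup) : π.erase v = ρ.erase v := by
  obtain ⟨-, A, B, C, -, hB, rfl, rfl⟩ := h
  have hvA : v ∉ A := fun hm => (List.nodup_append.1 hπ).2.2 v hm v (by simp) rfl
  have hvB : v ∉ B := fun hm => (hB v hm).false
  simp [List.erase_append_right _ hvA, List.erase_append_right _ hvB]

end RightJump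

section Jump

variable {x y : List ℕ} {j d : ℕ}

lemma ne_of_jump (h : LeftJump x y j d ∨ RightJump x y j d) : x ≠ y :=
  h.elim (fun h => h.ne.symm) RightJump.ne

lemma one_lt_of_jump {m : ℕ} (hx : x ∈ SymmList m)
    (h : LeftJump x y j d ∨ RightJump x y j d) : 1 < j := by
  obtain ⟨b, hbj, hbx⟩ : ∃ b < j, b ∈ x := by
    rcases h with h | h
    · obtain ⟨b, hb, -, hbx⟩ := h.exists_lt_mem; exact ⟨b, hb, hbx⟩
    · obtain ⟨b, hb, hbx, -⟩ := h.exists_lt_mem; exact ⟨b, hb, hbx⟩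
  have := (SymmList.mem_iff hx).1 hbx
  omega

lemma pdel_jump {m : ℕ} (hx : x ∈ SymmList m) (hy : y ∈ SymmList m) (hj : j < m)
    (h : LeftJump x y j d ∨ RightJump x y j d) :
    LeftJump (pdel x) (pdel y) j d ∨ RightJump (pdel x) (pdel y) j d := by
  rw [SymmList.pdel_eq hx, SymmList.pdel_eq hy]
  exact h.imp (·.erase_of_lt hj) (·.erase_of_lt hj)

lemma pdel_eq_of_jump (hx : x ∈ SymmList j) (hy : y ∈ SymmList j)
    (h : LeftJump x y j d ∨ RightJump x y j d) : pdel x = pdel y := by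
  rw [SymmList.pdel_eq hx, SymmList.pdel_eq hy]
  exact h.elim (fun h => (h.erase_eq (SymmList.nodup hy)).symm)
    (·.erase_eq (SymmList.nodup hx))

end Jump

lemma eq_cins_one_pdel {l : List ℕ} (h : l.head? = some l.length) : l = cins 1 (pdel l) := by
  obtain _ | ⟨a, t⟩ := l
  · simp at h
  · simp only [List.head?_cons, List.length_cons, Option.some.injEq] at h
    subst h
    simp [pdel, cins]

lemma eq_cins_length_pdel {l : List ℕ} (hl : l.Nodup) (h : l.getLast? = some l.length) :
    l = cins l.length (pdel l) := by
  generalize hn : l.length = n at h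
  obtain ⟨t, rfl⟩ := List.getLast?_eq_some_iff.1 h
  have hfresh : n ∉ t :=
    fun hm => (List.nodup_append.1 hl).2.2 _ hm _ (List.mem_singleton_self _) rfl
  simp only [List.length_append, List.length_singleton] at hn
  subst hn
  simp [pdel, cins, List.erase_append_right _ hfresh]

section Adjacent

variable {L : Set (List ℕ)} {k d : ℕ} {x y : List ℕ}

lemma cBar_getLast?_of_jump_top {j : ℕ} (hz : IsZigzag j L) (hx : (Jseq j L)[k]? = some x)
    (hy : (Jseq j L)[k + 1]? = some y) (hjump : LeftJump x y j d ∨ RightJump x y j d)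
    (hb : y.head? = some j ∨ y.getLast? = some j) :
    pdel x = pdel y ∧ (cBar L j x).getLast? ≠ some x ∧ (cBar L j y).getLast? = some y := by
  have hyL := mem_of_mem_Jseq hz (List.mem_of_getElem? hy)
  have hxS := hz.subset_symmList (mem_of_mem_Jseq hz (List.mem_of_getElem? hx))
  have hyS := hz.subset_symmList hyL
  have hpdel := pdel_eq_of_jump hxS hyS hjump
  obtain ⟨m, rfl⟩ : ∃ m, j = m + 1 := ⟨j - 1, by have := one_lt_of_jump hxS hjump; omega⟩
  rcases Jseq_succ_adjacent hz hx hy with ⟨-, -, hhead⟩ | ⟨hne, -⟩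
  · have hylast : (cBar L (m + 1) y).getLast? = some y := by
      have hy' : y = cins 1 (pdel y) ∨ y = cins (m + 1) (pdel y) := by
        rw [← SymmList.length_eq hyS] at hb ⊢
        exact hb.imp eq_cins_one_pdel (eq_cins_length_pdel (SymmList.nodup hyS))
      rcases cBar_endpoints hz hyL with ⟨h1, h2⟩ | ⟨h1, h2⟩ <;>
        rcases hy' with hy' | hy' <;>
        first
        | exact h2.trans (congrArg some hy'.symm)
        | exact absurd (h1.trans (congrArg some hy'.symm)) hhead
    refine ⟨hpdel, ?_, hylast⟩
    rw [cBar, hpdel, ← cBar, hylast, Ne, Option.some.injEq]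
    exact (ne_of_jump hjump).symm
  · exact absurd hpdel hne

lemma cBar_getLast?_of_jump_lt {m j : ℕ} (hj : j < m + 1) (hz : IsZigzag (m + 1) L)
    (hx : (Jseq (m + 1) L)[k]? = some x) (hy : (Jseq (m + 1) L)[k + 1]? = some y)
    (hjump : LeftJump x y j d ∨ RightJump x y j d) :
    (∃ c, (Jseq m (pdel '' L))[c]? = some (pdel x) ∧
        (Jseq m (pdel '' L))[c + 1]? = some (pdel y)) ∧
      (LeftJump (pdel x) (pdel y) j d ∨ RightJump (pdel x) (pdel y) j d) ∧
      (cBar L (m + 1) x).getLast? = some x ∧ (cBar L (m + 1) y).getLast? ≠ some y := by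
  have hyL := mem_of_mem_Jseq hz (List.mem_of_getElem? hy)
  have hxS := hz.subset_symmList (mem_of_mem_Jseq hz (List.mem_of_getElem? hx))
  have hyS := hz.subset_symmList hyL
  have hjump' := pdel_jump hxS hyS hj hjump
  rcases Jseq_succ_adjacent hz hx hy with ⟨hpdel, -⟩ | ⟨-, hc, hxlast, hyhead⟩
  · exact absurd hpdel (ne_of_jump hjump')
  · refine ⟨hc, hjump', hxlast, fun hylast => ?_⟩
    have := one_lt_of_jump hxS hjump
    exact cBar_head?_ne_getLast? (by omega) hz hyL (hyhead.trans hylast.symm)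

end Adjacent

section sVec

variable {n : ℕ} {L : Set (List ℕ)} {x : List ℕ}

lemma sVec_add_two_of_getLast? (h : (cBar L (n + 2) x).getLast? = some x) (i : ℕ) :
    sVec (n + 2) L x i =
      if i ≤ n then sVec (n + 1) (pdel '' L) (pdel x) i
      else if i = n + 1 then n + 1
      else if i = n + 2 then sVec (n + 1) (pdel '' L) (pdel x) (n + 1) else 0 :=
  if_pos h

lemma sVec_add_two_of_not_getLast? (h : (cBar L (n + 2) x).getLast? ≠ some x) (i : ℕ) :
    sVec (n + 2) L x i =
      if i ≤ n + 1 then sVec (n + 1) (pdel '' L) (pdel x) i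
      else if i = n + 2 then n + 2 else 0 :=
  if_neg h

end sVec

/-- The induction on the level `m` needs the extra fact `s_{m,m}^ρ = m` above level `j`, which
feeds the entry `i = m - 1` at the next level. -/
lemma sVec_of_adjacent_jump {j m : ℕ} (hjm : j ≤ m) {L : Set (List ℕ)} (hz : IsZigzag m L)
    {k d : ℕ} {x y : List ℕ} (hx : (Jseq m L)[k]? = some x) (hy : (Jseq m L)[k + 1]? = some y)
    (hjump : LeftJump x y j d ∨ RightJump x y j d)
    (hb : (pdel^[m - j] y).head? = some j ∨ (pdel^[m - j] y).getLast? = some j) :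
    (∀ i, 1 ≤ i → i ≤ m - 1 → i ≠ j - 1 → i ≠ j → sVec m L y i = sVec m L x i) ∧
      sVec m L y (j - 1) = j - 1 ∧ sVec m L y j = sVec m L x (j - 1) ∧
      (j < m → sVec m L y m = m) := by
  have hj : 1 < j := one_lt_of_jump
    (hz.subset_symmList (mem_of_mem_Jseq hz (List.mem_of_getElem? hx))) hjump
  induction m, hjm using Nat.le_induction generalizing L k x y with
  | base =>
    rw [Nat.sub_self, Function.iterate_zero, id] at hb
    obtain ⟨hpdel, hxlast, hylast⟩ := cBar_getLast?_of_jump_top hz hx hy hjump hb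
    obtain ⟨n, rfl⟩ : ∃ n, j = n + 2 := ⟨j - 2, by omega⟩
    simp only [sVec_add_two_of_not_getLast? hxlast, sVec_add_two_of_getLast? hylast, hpdel,
      show n + 2 - 1 = n + 1 from rfl]
    refine ⟨fun i _ _ _ _ => ?_, ?_, ?_, by omega⟩ <;> split_ifs <;> omega
  | succ m hjm ih =>
    obtain ⟨⟨c, hcx, hcy⟩, hjump', hxlast, hylast⟩ :=
      cBar_getLast?_of_jump_lt (Nat.lt_succ_of_le hjm) hz hx hy hjump
    rw [Nat.sub_add_comm hjm, Function.iterate_succ_apply] at hb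
    obtain ⟨h₁, h₂, h₃, h₄⟩ := ih hz.pdel_image hcx hcy hjump' hb
    obtain ⟨n, rfl⟩ : ∃ n, m = n + 1 := ⟨m - 1, by omega⟩
    simp only [sVec_add_two_of_getLast? hxlast, sVec_add_two_of_not_getLast? hylast]
    refine ⟨fun i hi₁ hi₂ hi₃ hi₄ => ?_, ?_, ?_, fun _ => ?_⟩
    · split_ifs <;>
        first | omega | exact h₁ i hi₁ (by omega) hi₃ hi₄ | (subst i; exact h₄ (by omega))
    · rw [if_pos (by omega)]; exact h₂
    · rw [if_pos (by omega), if_pos (by omega)]; exact h₃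
    · split_ifs <;> omega

theorem sVec_update_jn_general (n : ℕ) (L : Set (List ℕ)) (hL : IsZigzag n L)
    (k : ℕ) (π ρ : List ℕ)
    (hπ : (Jseq n L)[k]? = some π) (hρ : (Jseq n L)[k + 1]? = some ρ)
    (j : ℕ) (hj : j < n)
    (h1 : ∃ d, LeftJump π ρ j d ∨ RightJump π ρ j d)
    (hboundary : (pdel^[n - j] ρ).head? = some j ∨ (pdel^[n - j] ρ).getLast? = some j) :
    (∀ i, 1 ≤ i → i ≤ n - 1 → i ≠ j - 1 → i ≠ j → sVec n L ρ i = sVec n L π i) ∧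
    sVec n L ρ (j - 1) = j - 1 ∧
    sVec n L ρ j = sVec n L π (j - 1) := by
  obtain ⟨d, hjump⟩ := h1
  obtain ⟨h₁, h₂, h₃, -⟩ := sVec_of_adjacent_jump hj.le hL hπ hρ hjump hboundary
  exact ⟨h₁, h₂, h₃⟩

/-- Let `L_n ⊆ S_n` be a zigzag language and let `π, ρ, σ` be
three consecutive permutations in `J(L_n)`. If `ρ` is obtained from `π` by a
jump of a value `j < n`, `σ` is obtained from `ρ` by a jump of the value `n`,
and the value `j` is at the first or last position of `p^{n−j}(ρ)`, then
`s_{n,i}^ρ = s_{n,i}^π` for all `i ∈ {1,…,n−1} ∖ {j−1, j}`,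
`s_{n,j−1}^ρ = j−1`, and `s_{n,j}^ρ = s_{n,j−1}^π`. -/
theorem sVec_update_jn (n : ℕ) (L : Set (List ℕ)) (hL : IsZigzag n L)
    (k : ℕ) (π ρ σ : List ℕ)
    (hπ : (Jseq n L)[k]? = some π) (hρ : (Jseq n L)[k + 1]? = some ρ)
    (hσ : (Jseq n L)[k + 2]? = some σ)
    (j : ℕ) (hj : j < n)
    (h1 : ∃ d, LeftJump π ρ j d ∨ RightJump π ρ j d)
    (h2 : ∃ d, LeftJump ρ σ n d ∨ RightJump ρ σ n d)
    (hboundary : (pdel^[n - j] ρ).head? = some j ∨ (pdel^[n - j] ρ).getLast? = some j) :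
    (∀ i, 1 ≤ i → i ≤ n - 1 → i ≠ j - 1 → i ≠ j → sVec n L ρ i = sVec n L π i) ∧
    sVec n L ρ (j - 1) = j - 1 ∧
    sVec n L ρ j = sVec n L π (j - 1) :=
  sVec_update_jn_general n L hL k π ρ hπ hρ j hj h1 hboundary
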